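/- arXiv:2104.01746 — 3 statements merged into one kernel-verified Lean document; each statement's English description precedes it below -/
import Mathlib

section
/- For every m ≥ 1, the Bernoulli-Carlitz numbers satisfy the closed form BC_m = Π(m) · Σ_{k=1}^{m} (−1)^k Σ 1/(Π(r^{i_1}) ⋯ Π(r^{i_k})), where the inner sum ranges over all k-tuples (i_1, …, i_k) of nonnegative integers with r^{i_1} + ⋯ + r^{i_k} = m + k and r^{i_j} > 1 for all j. -/
/-!
Write `e_C(z)/z = 1 + g` with `g(0) = 0`. Then `1/(1 + g) = ∑ₖ (-g)ᵏ`, and since `zᵏ ∣ gᵏ`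
only `k ≤ m` contribute to the coefficient of `zᵐ`. The coefficient of `zᵐ` in `gᵏ` is a sum over
compositions `m = l₁ + ⋯ + lₖ` in which every part is of the form `lₜ = r^(iₜ) - 1 ≥ 1`, each
contributing `∏ 1/D_{iₜ}`; substituting `lₜ + 1 = r^(iₜ)` turns these into the exponent tuples of
the closed form, and `Π(r^i) = D_i`.
-/

noncomputable section

/-- The Carlitz bracket `[i] = T^(r^i) - T` in `k = 𝔽_r(T)`, where `r = |Fq|`. -/
def carlitzBracket (Fq : Type*) [Field Fq] [Fintype Fq] (i : ℕ) : RatFunc Fq :=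
  RatFunc.X ^ (Fintype.card Fq) ^ i - RatFunc.X

/-- `D_0 = 1`, `D_i = [i]·[i-1]^r ⋯ [1]^(r^(i-1))`, via `D_{i+1} = [i+1] * D_i ^ r`. -/
def carlitzD (Fq : Type*) [Field Fq] [Fintype Fq] : ℕ → RatFunc Fq
  | 0 => 1
  | i + 1 => carlitzBracket Fq (i + 1) * carlitzD Fq i ^ Fintype.card Fq

/-- The Carlitz factorial `Π(n) = ∏_j D_j ^ c_j`, where `n = ∑_j c_j r^j` is the base-`r`
expansion of `n`. -/
def carlitzPi (Fq : Type*) [Field Fq] [Fintype Fq] (n : ℕ) : RatFunc Fq :=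
  ∏ j ∈ Finset.range (n + 1),
    carlitzD Fq j ^ ((Nat.digits (Fintype.card Fq) n).getD j 0)

/-- The coefficient `δ*_e` of `z^e` in `e_C(z)/z = ∑_{j≥0} z^(r^j - 1)/D_j`:
`δ*_e = 1/D_n` if `e = r^n - 1` for some `n`, and `0` otherwise. -/
def carlitzExpCoeff (Fq : Type*) [Field Fq] [Fintype Fq] (e : ℕ) : RatFunc Fq :=
  if (Fintype.card Fq) ^ (Nat.log (Fintype.card Fq) (e + 1)) = e + 1 then
    (carlitzD Fq (Nat.log (Fintype.card Fq) (e + 1)))⁻¹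
  else 0

/-- The Bernoulli-Carlitz numbers, defined by `z/e_C(z) = ∑_n (BC_n/Π(n)) z^n`. -/
def bernoulliCarlitz (Fq : Type*) [Field Fq] [Fintype Fq] (n : ℕ) : RatFunc Fq :=
  carlitzPi Fq n *
    PowerSeries.coeff n (PowerSeries.mk (carlitzExpCoeff Fq))⁻¹

open Finset PowerSeries

namespace PowerSeries

theorem coeff_inv_eq_sum_coeff_one_sub_pow {K : Type*} [Field K] {f : K⟦X⟧}
    (hf : constantCoeff f = 1) (n : ℕ) :
    coeff n f⁻¹ = ∑ k ∈ range (n + 1), coeff n ((1 - f) ^ k) := by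
  have hgeom : ∑ k ∈ range (n + 1), (1 - f) ^ k = f⁻¹ - f⁻¹ * (1 - f) ^ (n + 1) := by
    rw [← mul_one_sub, ← mul_neg_geom_sum, sub_sub_cancel, ← mul_assoc,
      PowerSeries.inv_mul_cancel f (by simp [hf]), one_mul]
  have htail : coeff n (f⁻¹ * (1 - f) ^ (n + 1)) = 0 := by
    refine X_pow_dvd_iff.mp (dvd_mul_of_dvd_right (pow_dvd_pow_of_dvd ?_ _) _) n n.lt_succ_self
    exact X_dvd_iff.mpr (by simp [hf])
  rw [← map_sum, hgeom, map_sub, htail, sub_zero]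

theorem coeff_inv_eq_sum_Icc {K : Type*} [Field K] {f : K⟦X⟧}
    (hf : constantCoeff f = 1) {n : ℕ} (hn : 1 ≤ n) :
    coeff n f⁻¹ = ∑ k ∈ Icc 1 n, (-1) ^ k * coeff n ((f - 1) ^ k) := by
  rw [coeff_inv_eq_sum_coeff_one_sub_pow hf, range_eq_Ico, sum_eq_sum_Ico_succ_bot (by omega),
    Ico_add_one_right_eq_Icc, pow_zero, coeff_one, if_neg (by omega), zero_add]
  refine sum_congr rfl fun k _ => ?_
  rw [← neg_sub f 1, neg_pow, show (-1 : K⟦X⟧) = C (-1) by simp, ← map_pow, coeff_C_mul]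

theorem coeff_pow_eq_sum_piAntidiag {R : Type*} [CommSemiring R] (k n : ℕ) (φ : R⟦X⟧) :
    coeff n (φ ^ k) = ∑ l ∈ piAntidiag (univ : Finset (Fin k)) n, ∏ t, coeff (l t) φ := by
  classical
  rw [← Fin.prod_const, coeff_prod, finsuppAntidiag, sum_map]
  exact sum_attach (piAntidiag univ n) fun l => ∏ t, coeff (l t) φ

end PowerSeries

/-- The bound `iₜ ≤ m + k` only serves to make this set finite, see `mem_expTuples`. -/
def expTuples (q m k : ℕ) : Finset (Fin k → ℕ) :=
  (Fintype.piFinset fun _ : Fin k => range (m + k + 1)).filter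
    (fun i => (∑ t, q ^ i t = m + k) ∧ ∀ t, 1 < q ^ i t)

theorem mem_expTuples {q m k : ℕ} (hq : 1 < q) {i : Fin k → ℕ} :
    i ∈ expTuples q m k ↔ (∑ t, q ^ i t = m + k) ∧ ∀ t, 1 < q ^ i t := by
  refine ⟨fun hi => (mem_filter.mp hi).2, fun hi => mem_filter.mpr ⟨?_, hi⟩⟩
  refine Fintype.mem_piFinset.mpr fun t => mem_range.mpr ?_
  calc i t < q ^ i t := Nat.lt_pow_self hq
    _ ≤ ∑ t, q ^ i t :=
      single_le_sum (f := fun t => q ^ i t) (fun _ _ => Nat.zero_le _) (mem_univ t)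
    _ < m + k + 1 := by omega

theorem sum_piAntidiag_eq_sum_expTuples {R : Type*} [CommSemiring R] {q : ℕ} (hq : 1 < q)
    (m k : ℕ) (h : ℕ → R) (hh : ∀ e, h e ≠ 0 → e ≠ 0 ∧ ∃ j, q ^ j = e + 1) :
    ∑ l ∈ piAntidiag (univ : Finset (Fin k)) m, ∏ t, h (l t) =
      ∑ i ∈ expTuples q m k, ∏ t, h (q ^ i t - 1) := by
  symm
  refine sum_bij_ne_zero (fun i _ _ t => q ^ i t - 1) ?_ ?_ ?_ (fun _ _ _ => rfl)
  · intro i hi _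
    obtain ⟨hsum, hgt⟩ := (mem_expTuples hq).mp hi
    rw [mem_piAntidiag, sum_tsub_distrib _ fun t _ => (hgt t).le, hsum]
    simp
  · intro i _ _ i' _ _ hii'
    funext t
    have hpos := Nat.pow_pos (n := i t) (by omega : 0 < q)
    have hpos' := Nat.pow_pos (n := i' t) (by omega : 0 < q)
    exact Nat.pow_right_injective hq (show q ^ i t = q ^ i' t by have := congrFun hii' t; omega)
  · intro l hl hprod
    have hsum : ∑ t, l t = m := by simpa using hl
    choose hne j hj using fun t => hh (l t) fun h0 => hprod (prod_eq_zero (mem_univ t) h0)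
    have hjl : (fun t => q ^ j t - 1) = l := funext fun t => by rw [hj]; omega
    refine ⟨j, (mem_expTuples hq).mpr ⟨?_, fun t => ?_⟩, ?_, hjl⟩
    · simp [hj, sum_add_distrib, hsum]
    · have := hne t; rw [hj]; omega
    · simpa [← hjl] using hprod

theorem Nat.getD_digits_base_pow {b : ℕ} (hb : 1 < b) (n j : ℕ) :
    (Nat.digits b (b ^ n)).getD j 0 = if j = n then 1 else 0 := by
  have h := Nat.digits_base_pow_mul (k := n) hb one_pos
  rw [mul_one, Nat.digits_of_lt b 1 one_ne_zero hb] at h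
  rw [h, List.getD_eq_getElem?_getD, List.getElem?_append, List.getElem?_singleton]
  split_ifs <;> grind

section Carlitz

variable (Fq : Type*) [Field Fq] [Fintype Fq]

theorem carlitzPi_card_pow (n : ℕ) : carlitzPi Fq (Fintype.card Fq ^ n) = carlitzD Fq n := by
  have hq : 1 < Fintype.card Fq := Fintype.one_lt_card
  simp_rw [carlitzPi, Nat.getD_digits_base_pow hq, pow_ite, pow_one, pow_zero]
  rw [prod_ite_eq', if_pos (mem_range.mpr (Nat.lt_succ_of_lt (Nat.lt_pow_self hq)))]

theorem carlitzExpCoeff_zero : carlitzExpCoeff Fq 0 = 1 := by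
  simp [carlitzExpCoeff, carlitzD]

theorem carlitzExpCoeff_card_pow_sub_one (j : ℕ) :
    carlitzExpCoeff Fq (Fintype.card Fq ^ j - 1) = (carlitzD Fq j)⁻¹ := by
  have hq : 1 < Fintype.card Fq := Fintype.one_lt_card
  rw [carlitzExpCoeff, Nat.sub_add_cancel (Nat.one_le_pow _ _ (by omega)), Nat.log_pow hq,
    if_pos rfl]

theorem exists_card_pow_eq_of_carlitzExpCoeff_ne_zero {e : ℕ} (he : carlitzExpCoeff Fq e ≠ 0) :
    ∃ j, Fintype.card Fq ^ j = e + 1 := by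
  rw [carlitzExpCoeff] at he
  split_ifs at he with h
  · exact ⟨_, h⟩
  · exact absurd rfl he

theorem coeff_mk_carlitzExpCoeff_sub_one (e : ℕ) :
    coeff e (mk (carlitzExpCoeff Fq) - 1) = if e = 0 then 0 else carlitzExpCoeff Fq e := by
  split_ifs with he
  · simp [he, carlitzExpCoeff_zero]
  · simp [coeff_one, he]

end Carlitz

/-- **Closed form expression for Bernoulli-Carlitz numbers.**  For every `m ≥ 1`,
`BC_m = Π(m) ∑_{k=1}^m (-1)^k ∑_{r^(i_1)+⋯+r^(i_k)=m+k, r^(i_t) > 1} 1/(Π(r^(i_1)) ⋯ Π(r^(i_k)))`,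
the inner sum being over all `k`-tuples of nonnegative integers `(i_1, …, i_k)` with
`r^(i_1) + ⋯ + r^(i_k) = m + k` and `r^(i_t) > 1` for all `t`. -/
theorem bernoulliCarlitz_closedForm (Fq : Type*) [Field Fq] [Fintype Fq]
    (m : ℕ) (hm : 1 ≤ m) :
    bernoulliCarlitz Fq m =
      carlitzPi Fq m *
        ∑ k ∈ Finset.Icc 1 m, (-1 : RatFunc Fq) ^ k *
          ∑ i ∈ (Fintype.piFinset fun _ : Fin k => Finset.range (m + k + 1)).filter
              (fun i => (∑ t, (Fintype.card Fq) ^ i t = m + k) ∧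
                ∀ t, 1 < (Fintype.card Fq) ^ i t),
            ∏ t, (carlitzPi Fq ((Fintype.card Fq) ^ i t))⁻¹ := by
  have hq : 1 < Fintype.card Fq := Fintype.one_lt_card
  have hf : constantCoeff (mk (carlitzExpCoeff Fq)) = 1 := by
    rw [← coeff_zero_eq_constantCoeff_apply, coeff_mk, carlitzExpCoeff_zero]
  have hg (e : ℕ) (he : coeff e (mk (carlitzExpCoeff Fq) - 1) ≠ 0) :
      e ≠ 0 ∧ ∃ j, Fintype.card Fq ^ j = e + 1 := by
    rw [coeff_mk_carlitzExpCoeff_sub_one] at he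
    split_ifs at he with he0
    exacts [absurd rfl he, ⟨he0, exists_card_pow_eq_of_carlitzExpCoeff_ne_zero Fq he⟩]
  rw [bernoulliCarlitz, coeff_inv_eq_sum_Icc hf hm]
  refine congrArg _ (sum_congr rfl fun k _ => ?_)
  rw [coeff_pow_eq_sum_piAntidiag, sum_piAntidiag_eq_sum_expTuples hq m k _ hg]
  refine congrArg _ (sum_congr rfl fun i hi => prod_congr rfl fun t _ => ?_)
  have hit : Fintype.card Fq ^ i t - 1 ≠ 0 := by
    have := ((mem_expTuples hq).mp hi).2 t; omega
  rw [coeff_mk_carlitzExpCoeff_sub_one, if_neg hit, carlitzExpCoeff_card_pow_sub_one,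
    carlitzPi_card_pow]
end
end

section
/- For every m ≥ 1, the Cauchy-Carlitz numbers satisfy CC_m = (−1)^m Π(m) · det A, where A is the m×m lower Hessenberg matrix over k with entries A_{i,j} = δ**_{i−j+1} for 1 ≤ j ≤ i ≤ m, A_{i,i+1} = 1 for 1 ≤ i ≤ m−1, and A_{i,j} = 0 for j > i+1; here δ**_e = (−1)^n/L_n if e = r^n − 1 for some nonnegative integer n, and δ**_e = 0 otherwise. -/
/-!
Write `log_C(z)/z = ∑ a_e z^e` with `a_0 = 1` and `z/log_C(z) = ∑ g_e z^e`. The vector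
`(g_0, …, g_m)` solves the unitriangular Toeplitz system `T g = e₀`, `T_{ij} = a_{i-j}`, of
size `m + 1`. As `det T = 1`, Cramer's rule gives `g_m = adj(T)_{m,0}`, which is `(-1)^m` times
the minor of `T` without its first row and last column; that minor is the Hessenberg matrix,
its superdiagonal ones being the entries `a_0 = 1`.
-/

noncomputable section

/-- `L_0 = 1`, `L_i = [i]·[i-1] ⋯ [1]`. -/
def carlitzL (Fq : Type*) [Field Fq] [Fintype Fq] : ℕ → RatFunc Fq
  | 0 => 1
  | i + 1 => carlitzBracket Fq (i + 1) * carlitzL Fq i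

/-- `δ**_e = (-1)^n/L_n` if `e = r^n - 1` for some nonnegative integer `n`, and `0`
otherwise. -/
def deltaStarStar (Fq : Type*) [Field Fq] [Fintype Fq] (e : ℕ) : RatFunc Fq :=
  if (Fintype.card Fq) ^ (Nat.log (Fintype.card Fq) (e + 1)) = e + 1 then
    (-1) ^ (Nat.log (Fintype.card Fq) (e + 1)) /
      carlitzL Fq (Nat.log (Fintype.card Fq) (e + 1))
  else 0

/-- The Cauchy-Carlitz numbers, defined by `z/log_C(z) = ∑_n (CC_n/Π(n)) z^n`, where
`log_C(z)/z = ∑_e δ**_e z^e`. -/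
def cauchyCarlitz (Fq : Type*) [Field Fq] [Fintype Fq] (n : ℕ) : RatFunc Fq :=
  carlitzPi Fq n * PowerSeries.coeff n (PowerSeries.mk (deltaStarStar Fq))⁻¹

open Matrix PowerSeries Finset

section Toeplitz

variable {R : Type*} [CommRing R]

def lowerToeplitz (f : R⟦X⟧) (n : ℕ) : Matrix (Fin n) (Fin n) R :=
  of fun i j => if (j : ℕ) ≤ i then coeff ((i : ℕ) - j) f else 0

def lowerHessenberg (a : ℕ → R) (m : ℕ) : Matrix (Fin m) (Fin m) R :=
  of fun i j : Fin m =>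
    if (j : ℕ) = (i : ℕ) + 1 then 1
    else if (j : ℕ) ≤ (i : ℕ) then a ((i : ℕ) - (j : ℕ) + 1)
    else 0

lemma det_lowerToeplitz (f : R⟦X⟧) (n : ℕ) :
    (lowerToeplitz f n).det = constantCoeff f ^ n := by
  rw [det_of_isLowerTriangular]
  · simp [lowerToeplitz]
  · intro i j hij
    have : ¬ (j : ℕ) ≤ i := by simpa using hij
    simp only [lowerToeplitz, of_apply, if_neg this]

lemma lowerToeplitz_mulVec_coeff (f g : R⟦X⟧) (n : ℕ) (i : Fin n) :
    (lowerToeplitz f n *ᵥ fun j => coeff j g) i = coeff i (f * g) := by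
  rw [mul_comm, coeff_mul, Finset.Nat.sum_antidiagonal_eq_sum_range_succ_mk]
  simp only [mulVec, dotProduct, lowerToeplitz, of_apply, ite_mul, zero_mul]
  rw [Fin.sum_univ_eq_sum_range
      (fun j => if j ≤ (i : ℕ) then coeff ((i : ℕ) - j) f * coeff j g else 0),
    ← sum_range_add_sum_Ico _ (Nat.succ_le_of_lt i.isLt),
    sum_eq_zero (s := Ico _ n) fun k hk => if_neg (by rw [mem_Ico] at hk; omega), add_zero]
  refine Finset.sum_congr rfl fun k hk => ?_
  rw [if_pos (Nat.lt_succ_iff.mp (mem_range.mp hk)), mul_comm]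

lemma submatrix_lowerToeplitz_mk {a : ℕ → R} (ha : a 0 = 1) (m : ℕ) :
    (lowerToeplitz (mk a) (m + 1)).submatrix Fin.succ Fin.castSucc = lowerHessenberg a m := by
  ext i j
  simp only [lowerToeplitz, lowerHessenberg, submatrix_apply, of_apply, Fin.val_succ,
    Fin.val_castSucc, coeff_mk]
  split_ifs <;>
    first | rfl | omega | rw [show (i : ℕ) + 1 - j = 0 by omega, ha] | (congr 1; omega)

lemma eq_adjugate_mulVec_of_mulVec_eq {n : Type*} [Fintype n] [DecidableEq n]
    {A : Matrix n n R} (hA : A.det = 1) {v b : n → R} (h : A *ᵥ v = b) :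
    v = A.adjugate *ᵥ b := by
  rw [← h, mulVec_mulVec, adjugate_mul, hA, one_smul, one_mulVec]

lemma coeff_eq_neg_one_pow_mul_det_lowerHessenberg {a : ℕ → R} (ha : a 0 = 1) {g : R⟦X⟧}
    (hg : mk a * g = 1) (m : ℕ) :
    coeff m g = (-1) ^ m * (lowerHessenberg a m).det := by
  have hdet : (lowerToeplitz (mk a) (m + 1)).det = 1 := by simp [det_lowerToeplitz, ha]
  have hsys : lowerToeplitz (mk a) (m + 1) *ᵥ (fun j => coeff j g) = Pi.single 0 1 := by
    ext i
    rw [lowerToeplitz_mulVec_coeff, hg, coeff_one]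
    rcases Fin.eq_zero_or_eq_succ i with rfl | ⟨j, rfl⟩ <;> simp
  have hcramer := congrFun (eq_adjugate_mulVec_of_mulVec_eq hdet hsys) (Fin.last m)
  rw [mulVec_single_one, col_apply, adjugate_fin_succ_eq_det_submatrix, Fin.succAbove_zero,
    Fin.succAbove_last, submatrix_lowerToeplitz_mk ha] at hcramer
  simpa using hcramer

end Toeplitz

lemma deltaStarStar_zero (Fq : Type*) [Field Fq] [Fintype Fq] : deltaStarStar Fq 0 = 1 := by
  simp [deltaStarStar, carlitzL]

theorem cauchyCarlitz_det_general (Fq : Type*) [Field Fq] [Fintype Fq]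
    (m : ℕ) :
    cauchyCarlitz Fq m = (-1 : RatFunc Fq) ^ m * carlitzPi Fq m *
      Matrix.det (Matrix.of fun i j : Fin m =>
        if (j : ℕ) = (i : ℕ) + 1 then 1
        else if (j : ℕ) ≤ (i : ℕ) then deltaStarStar Fq ((i : ℕ) - (j : ℕ) + 1)
        else 0) := by
  have hinv : mk (deltaStarStar Fq) * (mk (deltaStarStar Fq))⁻¹ = 1 :=
    PowerSeries.mul_inv_cancel _ (by simp [deltaStarStar_zero])
  rw [cauchyCarlitz, coeff_eq_neg_one_pow_mul_det_lowerHessenberg (deltaStarStar_zero Fq) hinv,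
    lowerHessenberg]
  ring

/-- **Determinant expression of Cauchy-Carlitz numbers.**  For every `m ≥ 1`,
`CC_m = (-1)^m Π(m) det A`, where `A` is the `m × m` lower Hessenberg matrix with entries
`A_{i,j} = δ**_{i-j+1}` for `j ≤ i`, `A_{i,i+1} = 1`, and `A_{i,j} = 0` otherwise. -/
theorem cauchyCarlitz_det (Fq : Type*) [Field Fq] [Fintype Fq]
    (m : ℕ) (hm : 1 ≤ m) :
    cauchyCarlitz Fq m = (-1 : RatFunc Fq) ^ m * carlitzPi Fq m *
      Matrix.det (Matrix.of fun i j : Fin m =>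
        if (j : ℕ) = (i : ℕ) + 1 then 1
        else if (j : ℕ) ≤ (i : ℕ) then deltaStarStar Fq ((i : ℕ) - (j : ℕ) + 1)
        else 0) :=
  cauchyCarlitz_det_general Fq m
end
end

section
/- Let F be a field, let f ∈ F[[z]] have nonzero constant term (so that 1/f ∈ F[[z]]), and let m ≥ 1. Then H^{(m)}(1/f) = Σ_{k=1}^{m} C(m+1, k+1) · ((−1)^k / f^{k+1}) · Σ_{i_1+⋯+i_k = m, i_1,…,i_k ≥ 0} H^{(i_1)}(f) ⋯ H^{(i_k)}(f), where C(m+1,k+1) is the binomial coefficient interpreted in F via the natural map ℕ → F. -/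
noncomputable section

/-- The Hasse-Teichmüller derivative of order `m`: it sends `∑_{n} c_n z^n` to
`∑_{n ≥ m} c_n · C(n, m) · z^(n-m)`, i.e. its `n`-th coefficient is `C(n+m, m) · c_{n+m}`. -/
def hasseDeriv (F : Type*) [Field F] (m : ℕ) (f : PowerSeries F) : PowerSeries F :=
  PowerSeries.mk fun n => ((n + m).choose m : F) * PowerSeries.coeff (n + m) f

/-! The Hasse derivatives of `f` are the coefficients of its Taylor series
`T f = ∑ₘ H⁽ᵐ⁾(f) tᵐ ∈ F[[z]][[t]]`, and `T` is multiplicative: after multiplying by `zᵐ`, the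
Leibniz rule `H⁽ᵐ⁾(fg) = ∑_{i+j=m} H⁽ⁱ⁾(f) H⁽ʲ⁾(g)` is Vandermonde's identity coefficientwise.
Hence `Q = T (1/f)` inverts `P = T f` in `F[[z]][[t]]`. With `c = 1/f` (the constant term of `Q`)
and `w = 1 - c P`, which is divisible by `t`, the coefficient of `tᵐ` in `Q` is that of
`c ∑_{k ≤ m} wᵏ`, and the identity `∑_{k ≤ m} (1 - v)ᵏ = ∑_j C(m+1, j+1) (-v)ʲ` at `v = c P`
turns this into `c ∑_j C(m+1, j+1) (-c)ʲ [tᵐ] Pʲ`. The term `j = 0` vanishes for `m ≥ 1`, and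
`[tᵐ] Pᵏ` is the sum over `i₁ + ⋯ + iₖ = m` of `H⁽ⁱ¹⁾(f) ⋯ H⁽ⁱᵏ⁾(f)`. -/

open Finset PowerSeries

theorem sum_range_one_add_pow {R : Type*} [CommRing R] (y : R) (n : ℕ) :
    ∑ k ∈ range n, (1 + y) ^ k = ∑ j ∈ range n, (n.choose (j + 1) : R) * y ^ j := by
  induction n with
  | zero => simp
  | succ n ih =>
    rw [sum_range_succ, ih, add_comm 1 y, add_pow]
    simp only [one_pow, mul_one, Nat.choose_succ_succ', Nat.cast_add, add_mul, sum_add_distrib]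
    rw [sum_range_succ (fun j => (n.choose (j + 1) : R) * y ^ j), Nat.choose_succ_self,
      Nat.cast_zero, zero_mul, add_zero, add_comm]
    simp only [mul_comm]

namespace PowerSeries

theorem coeff_pow_eq_sum_antidiagonalTuple {R : Type*} [CommSemiring R] (φ : R⟦X⟧) (k n : ℕ) :
    coeff n (φ ^ k) = ∑ x ∈ Nat.antidiagonalTuple k n, ∏ i, coeff (x i) φ := by
  classical
  rw [← Fin.prod_const, coeff_prod]
  exact sum_equiv Finsupp.equivFunOnFinite (by simp [Nat.mem_antidiagonalTuple]) (by simp)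

theorem coeff_eq_sum_choose_mul_coeff_pow {A : Type*} [CommRing A] {P Q : A⟦X⟧}
    (hPQ : P * Q = 1) (m : ℕ) :
    coeff m Q = constantCoeff Q * ∑ j ∈ range (m + 1),
      ((m + 1).choose (j + 1) : A) * (-constantCoeff Q) ^ j * coeff m (P ^ j) := by
  set c := constantCoeff Q
  set v := C c * P
  have hvQ : v * Q = C c := by rw [mul_assoc, hPQ, mul_one]
  have hXw : X ∣ 1 - v := by
    rw [X_dvd_iff, map_sub, map_one, map_mul, constantCoeff_C, mul_comm, ← map_mul, hPQ, map_one,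
      sub_self]
  have hgeom : C c * ∑ k ∈ range (m + 1), (1 - v) ^ k = Q - (1 - v) ^ (m + 1) * Q := by
    linear_combination
      Q * geom_sum_mul_neg (1 - v) (m + 1) - (∑ k ∈ range (m + 1), (1 - v) ^ k) * hvQ
  have htail : coeff m ((1 - v) ^ (m + 1) * Q) = 0 :=
    X_pow_dvd_iff.mp ((pow_dvd_pow_of_dvd hXw _).mul_right Q) m (Nat.lt_succ_self m)
  calc coeff m Q = coeff m (C c * ∑ k ∈ range (m + 1), (1 - v) ^ k) := by
        rw [hgeom, map_sub, htail, sub_zero]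
    _ = _ := by
        rw [coeff_C_mul, sub_eq_add_neg, sum_range_one_add_pow, map_sum]
        congr 1
        refine sum_congr rfl fun j _ => ?_
        rw [← neg_mul, ← map_neg, mul_pow, ← map_pow, ← mul_assoc, ← map_natCast C, ← map_mul,
          coeff_C_mul]

protected theorem inv_pow {k : Type*} [Field k] (f : k⟦X⟧) (n : ℕ) : (f ^ n)⁻¹ = f⁻¹ ^ n := by
  induction n with
  | zero => simp
  | succ n ih => rw [pow_succ, PowerSeries.mul_inv_rev, ih, pow_succ']

end PowerSeries

section HasseDeriv

variable {F : Type*} [Field F]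

@[simp]
theorem coeff_hasseDeriv (m n : ℕ) (f : F⟦X⟧) :
    coeff n (hasseDeriv F m f) = ((n + m).choose m : F) * coeff (n + m) f :=
  coeff_mk _ _

theorem hasseDeriv_zero (f : F⟦X⟧) : hasseDeriv F 0 f = f := by
  ext n
  simp

theorem hasseDeriv_one {m : ℕ} (hm : m ≠ 0) : hasseDeriv F m 1 = 0 := by
  ext n
  simp [coeff_one, hm]

theorem X_pow_mul_hasseDeriv (m : ℕ) (f : F⟦X⟧) :
    X ^ m * hasseDeriv F m f = PowerSeries.mk fun n => (n.choose m : F) * coeff n f := by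
  ext n
  rw [coeff_X_pow_mul', coeff_mk]
  split_ifs with h
  · rw [coeff_hasseDeriv, Nat.sub_add_cancel h]
  · rw [Nat.choose_eq_zero_of_lt (not_le.mp h), Nat.cast_zero, zero_mul]

theorem hasseDeriv_mul (m : ℕ) (f g : F⟦X⟧) :
    hasseDeriv F m (f * g) =
      ∑ ij ∈ antidiagonal m, hasseDeriv F ij.1 f * hasseDeriv F ij.2 g := by
  apply X_pow_mul_cancel (k := m)
  have hsplit : X ^ m * ∑ ij ∈ antidiagonal m, hasseDeriv F ij.1 f * hasseDeriv F ij.2 g =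
      ∑ ij ∈ antidiagonal m,
        (X ^ ij.1 * hasseDeriv F ij.1 f) * (X ^ ij.2 * hasseDeriv F ij.2 g) := by
    rw [mul_sum]
    refine sum_congr rfl fun ij hij => ?_
    rw [← mem_antidiagonal.mp hij, pow_add]
    ring
  rw [hsplit]
  ext n
  simp only [X_pow_mul_hasseDeriv, map_sum, coeff_mul, coeff_mk]
  rw [sum_comm, mul_sum]
  refine sum_congr rfl fun ab hab => ?_
  rw [← mem_antidiagonal.mp hab, Nat.add_choose_eq, Nat.cast_sum, sum_mul]
  refine sum_congr rfl fun ij _ => ?_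
  push_cast
  ring

def hasseTaylor (f : F⟦X⟧) : F⟦X⟧⟦X⟧ :=
  PowerSeries.mk fun m => hasseDeriv F m f

@[simp]
theorem coeff_hasseTaylor (m : ℕ) (f : F⟦X⟧) : coeff m (hasseTaylor f) = hasseDeriv F m f :=
  coeff_mk _ _

theorem constantCoeff_hasseTaylor (f : F⟦X⟧) : constantCoeff (hasseTaylor f) = f := by
  rw [← coeff_zero_eq_constantCoeff_apply, coeff_hasseTaylor, hasseDeriv_zero]

theorem hasseTaylor_one : hasseTaylor (1 : F⟦X⟧) = 1 := by
  ext m : 1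
  rcases eq_or_ne m 0 with rfl | hm
  · simp [hasseDeriv_zero]
  · rw [coeff_hasseTaylor, hasseDeriv_one hm, coeff_one, if_neg hm]

theorem hasseTaylor_mul (f g : F⟦X⟧) : hasseTaylor (f * g) = hasseTaylor f * hasseTaylor g := by
  ext m : 1
  simp only [coeff_hasseTaylor, coeff_mul, hasseDeriv_mul]

end HasseDeriv

/-- **Quotient rule for Hasse-Teichmüller derivatives (second form).**  For `f ∈ F[[z]]` with
nonzero constant term and `m ≥ 1`,
`H^(m)(1/f) = ∑_{k=1}^m C(m+1,k+1) ((-1)^k/f^(k+1)) ∑_{i_1+⋯+i_k=m, i_t ≥ 0}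
H^(i_1)(f) ⋯ H^(i_k)(f)`, where `C(m+1,k+1)` is taken in `F` via the natural map `ℕ → F`. -/
theorem hasseDeriv_inv' (F : Type*) [Field F] (f : PowerSeries F)
    (hf : PowerSeries.constantCoeff f ≠ 0) (m : ℕ) (hm : 1 ≤ m) :
    hasseDeriv F m f⁻¹ =
      ∑ k ∈ Finset.Icc 1 m,
        PowerSeries.C (((m + 1).choose (k + 1) : ℕ) : F) *
          ((-1 : PowerSeries F) ^ k * (f ^ (k + 1))⁻¹) *
          ∑ x ∈ Finset.Nat.antidiagonalTuple k m, ∏ i, hasseDeriv F (x i) f := by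
  have hinv : hasseTaylor f * hasseTaylor f⁻¹ = 1 := by
    rw [← hasseTaylor_mul, PowerSeries.mul_inv_cancel f hf, hasseTaylor_one]
  have hcoeff := coeff_eq_sum_choose_mul_coeff_pow hinv m
  rw [coeff_hasseTaylor, constantCoeff_hasseTaylor] at hcoeff
  rw [hcoeff, range_eq_Ico, sum_eq_sum_Ico_succ_bot (by omega), pow_zero, pow_zero, coeff_one,
    if_neg (by omega), mul_zero, zero_add, zero_add, Finset.Ico_add_one_right_eq_Icc, mul_sum]
  refine sum_congr rfl fun k _ => ?_
  simp only [coeff_pow_eq_sum_antidiagonalTuple, coeff_hasseTaylor, PowerSeries.inv_pow,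
    map_natCast]
  ring

end
end
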